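/- Let D be an STS_2(v) invariant under A_{v,f}, and let F be the eigenspace of A_{v,f} for the eigenvalue 1 (an f-dimensional subspace). Then the set of blocks of D contained in F forms an STS_2(f) on F, i.e., every 2-dimensional subspace of F is contained in exactly one block of D that lies inside F. -/
import Mathlib


/-- The action of a matrix `A` on subspaces of `GF(2)^v`, induced by the
right action `x ↦ x ⬝ A` on vectors. -/
def mapMat {v : ℕ} (A : Matrix (Fin v) (Fin v) (ZMod 2))
    (W : Submodule (ZMod 2) (Fin v → ZMod 2)) : Submodule (ZMod 2) (Fin v → ZMod 2) :=
  W.map A.vecMulLinear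

/-- A binary q-Steiner triple system `STS_2(v)`. -/
def IsSTS (v : ℕ) (D : Set (Submodule (ZMod 2) (Fin v → ZMod 2))) : Prop :=
  (∀ B ∈ D, Module.finrank (ZMod 2) B = 3) ∧
  ∀ L : Submodule (ZMod 2) (Fin v → ZMod 2), Module.finrank (ZMod 2) L = 2 →
    ∃! B, B ∈ D ∧ L ≤ B

/-- The block-diagonal matrix `A_{v,f}` over `GF(2)`: `(v-f)/2` consecutive 2×2 blocks
`[[0,1],[1,1]]` on the diagonal, followed by the `f×f` identity matrix. -/
def Avf (v f : ℕ) : Matrix (Fin v) (Fin v) (ZMod 2) :=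
  Matrix.of fun i j =>
    if (i : ℕ) < v - f then
      if (i : ℕ) % 2 = 0 then (if (j : ℕ) = (i : ℕ) + 1 then 1 else 0)
      else (if (j : ℕ) = (i : ℕ) - 1 ∨ (j : ℕ) = (i : ℕ) then 1 else 0)
    else (if j = i then 1 else 0)

/-- The eigenspace of `A` (acting by `x ↦ x ⬝ A`) for the eigenvalue `1`. -/
def eigOne {v : ℕ} (A : Matrix (Fin v) (Fin v) (ZMod 2)) :
    Submodule (ZMod 2) (Fin v → ZMod 2) :=
  LinearMap.ker (A.vecMulLinear - LinearMap.id)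

lemma zmod2_add_self : ∀ r : ZMod 2, r + r = 0 := by decide

lemma avf_row_ge {v f : ℕ} (B : Matrix (Fin v) (Fin v) (ZMod 2)) {i : Fin v}
    (hi : ¬ (i : ℕ) < v - f) (j : Fin v) : (Avf v f * B) i j = B i j := by
  rw [Matrix.mul_apply, Finset.sum_eq_single i]
  · simp [Avf, hi]
  · intro k _ hk; simp [Avf, hi, hk]
  · simp

lemma avf_row_even {v f : ℕ} (B : Matrix (Fin v) (Fin v) (ZMod 2)) {i : Fin v}
    (hi : (i : ℕ) < v - f) (he : (i : ℕ) % 2 = 0) (h1 : (i : ℕ) + 1 < v) (j : Fin v) :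
    (Avf v f * B) i j = B ⟨(i : ℕ) + 1, h1⟩ j := by
  rw [Matrix.mul_apply, Finset.sum_eq_single (⟨(i : ℕ) + 1, h1⟩ : Fin v)]
  · simp [Avf, hi, he]
  · intro k _ hk
    have : (k : ℕ) ≠ (i : ℕ) + 1 := fun h => hk (Fin.ext h)
    simp [Avf, hi, he, this]
  · simp

lemma avf_row_odd {v f : ℕ} (B : Matrix (Fin v) (Fin v) (ZMod 2)) {i : Fin v}
    (hi : (i : ℕ) < v - f) (ho : (i : ℕ) % 2 = 1) (j : Fin v) :
    (Avf v f * B) i j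
      = B ⟨(i : ℕ) - 1, lt_of_le_of_lt (Nat.sub_le _ _) i.isLt⟩ j + B i j := by
  have hne : ((⟨(i : ℕ) - 1, lt_of_le_of_lt (Nat.sub_le _ _) i.isLt⟩ : Fin v)) ≠ i := by
    intro h
    have := congrArg (fun t : Fin v => (t : ℕ)) h
    simp at this; omega
  rw [Matrix.mul_apply]
  have key : ∀ k : Fin v, Avf v f i k * B k j =
      (if k = (⟨(i : ℕ) - 1, lt_of_le_of_lt (Nat.sub_le _ _) i.isLt⟩ : Fin v) then B k j else 0)
      + (if k = i then B k j else 0) := by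
    intro k
    by_cases h1 : (k : ℕ) = (i : ℕ) - 1
    · have hk : k = (⟨(i : ℕ) - 1, lt_of_le_of_lt (Nat.sub_le _ _) i.isLt⟩ : Fin v) := Fin.ext h1
      have hk2 : k ≠ i := by rw [hk]; exact hne
      simp [Avf, hi, ho, h1, hk, hk2, hne]
    · by_cases h2 : (k : ℕ) = (i : ℕ)
      · have hk : k = i := Fin.ext h2
        have hk2 : k ≠ (⟨(i : ℕ) - 1, lt_of_le_of_lt (Nat.sub_le _ _) i.isLt⟩ : Fin v) := by
          rw [hk]; exact fun h => hne h.symm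
        simp [Avf, hi, ho, h1, h2, hk, hk2]
        intro h; exact absurd h.symm hne
      · have hk : k ≠ i := fun h => h2 (by rw [h])
        have hk2 : k ≠ (⟨(i : ℕ) - 1, lt_of_le_of_lt (Nat.sub_le _ _) i.isLt⟩ : Fin v) := by
          intro h; exact h1 (by rw [h])
        simp [Avf, hi, ho, h1, h2, hk, hk2]
  rw [Finset.sum_congr rfl (fun k _ => key k), Finset.sum_add_distrib]
  simp

lemma avf_cube {v f : ℕ} (hvf : Even (v - f)) :
    Avf v f * (Avf v f * Avf v f) = 1 := by
  have hm2 : (v - f) % 2 = 0 := Nat.even_iff.mp hvf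
  ext i j
  by_cases hi : (i : ℕ) < v - f
  · by_cases he : (i : ℕ) % 2 = 0
    · -- even row
      have h1m : (i : ℕ) + 1 < v - f := by omega
      have h1v : (i : ℕ) + 1 < v := lt_of_lt_of_le h1m (Nat.sub_le v f)
      rw [avf_row_even _ hi he h1v]
      rw [avf_row_odd _ (show ((⟨(i:ℕ)+1, h1v⟩ : Fin v) : ℕ) < v - f from h1m) (by simp; omega)]
      have heq : ∀ (h : ((⟨(i:ℕ)+1, h1v⟩ : Fin v) : ℕ) - 1 < v), (⟨_, h⟩ : Fin v) = i :=
        fun h => Fin.ext (by simp)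
      rw [heq]
      simp only [Avf, Matrix.of_apply, Matrix.one_apply, hi, he, h1m, if_pos]
      by_cases hj1 : (j : ℕ) = (i : ℕ) + 1
      · have h5 : i ≠ j := by intro h; rw [h] at hj1; omega
        simp [hj1, h5, show ¬ (1:ℕ) = 0 by omega, show (((⟨(i:ℕ)+1, h1v⟩:Fin v)):ℕ)%2 = 1 by simp; omega, show ((⟨(i:ℕ)+1, h1v⟩:Fin v):ℕ) = (i:ℕ)+1 from rfl]
        decide
      · by_cases hj2 : (j : ℕ) = (i : ℕ)
        · have h5 : i = j := Fin.ext hj2.symm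
          simp [hj1, hj2, h5, show (((⟨(i:ℕ)+1, h1v⟩:Fin v)):ℕ)%2 = 1 by simp; omega]
        · have h5 : i ≠ j := fun h => hj2 (by rw [h])
          simp [hj1, hj2, h5, show (((⟨(i:ℕ)+1, h1v⟩:Fin v)):ℕ)%2 = 1 by simp; omega]
    · -- odd row
      have ho : (i : ℕ) % 2 = 1 := by omega
      rw [avf_row_odd _ hi ho]
      have c0 : ((⟨(i : ℕ) - 1, lt_of_le_of_lt (Nat.sub_le _ _) i.isLt⟩ : Fin v) : ℕ)
          = (i : ℕ) - 1 := rfl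
      have h0m : ((⟨(i : ℕ) - 1, lt_of_le_of_lt (Nat.sub_le _ _) i.isLt⟩ : Fin v) : ℕ) < v - f := by
        rw [c0]; omega
      have h0e : ((⟨(i : ℕ) - 1, lt_of_le_of_lt (Nat.sub_le _ _) i.isLt⟩ : Fin v) : ℕ) % 2 = 0 := by
        rw [c0]; omega
      have h0v : ((⟨(i : ℕ) - 1, lt_of_le_of_lt (Nat.sub_le _ _) i.isLt⟩ : Fin v) : ℕ) + 1 < v := by
        rw [c0]; have := i.isLt; omega
      rw [avf_row_even _ h0m h0e h0v]
      have heq : ∀ (h : ((⟨(i : ℕ) - 1, lt_of_le_of_lt (Nat.sub_le _ _) i.isLt⟩ : Fin v) : ℕ) + 1 < v),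
          (⟨_, h⟩ : Fin v) = i := fun h => Fin.ext (by simp; omega)
      rw [heq, avf_row_odd _ hi ho]
      simp only [Avf, Matrix.of_apply, Matrix.one_apply, c0, hi, h0m, if_pos,
        show ((i:ℕ)-1) % 2 = 0 by omega, show ¬ (i:ℕ) % 2 = 0 by omega, if_neg, if_true, if_false,
        reduceIte, ite_false, ite_true]
      have hsub : (i:ℕ) - 1 + 1 = (i:ℕ) := by omega
      rw [hsub]
      by_cases hj1 : (j : ℕ) = (i : ℕ) - 1
      · have h5 : i ≠ j := by intro h; rw [h] at hj1; omega
        simp [hj1, h5, show ¬ (i:ℕ) - 1 = (i:ℕ) by omega, show ¬ (i:ℕ) = (i:ℕ) - 1 by omega]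
        decide
      · by_cases hj2 : (j : ℕ) = (i : ℕ)
        · have h5 : i = j := Fin.ext hj2.symm
          simp [hj1, hj2, h5]
          decide
        · have h5 : i ≠ j := fun h => hj2 (by rw [h])
          simp [hj1, hj2, h5]
  · rw [avf_row_ge _ hi, avf_row_ge _ hi]
    simp [Avf, hi, Matrix.one_apply, eq_comm]

set_option synthInstance.maxHeartbeats 1000000 in
/-- If `D` is an `STS_2(v)` invariant under `A_{v,f}` and `F` is the eigenspace of
`A_{v,f}` for the eigenvalue `1`, then the blocks of `D` contained in `F` form an
`STS_2(f)` on `F`: every 2-dimensional subspace of `F` lies in exactly one block of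
`D` that lies inside `F`. -/
theorem stmt7 (v f : ℕ) (hf : f ≤ v - 1) (hvf : Even (v - f))
    (D : Set (Submodule (ZMod 2) (Fin v → ZMod 2))) (hD : IsSTS v D)
    (hinv : (mapMat (Avf v f)) '' D = D) :
    ∀ L : Submodule (ZMod 2) (Fin v → ZMod 2),
      L ≤ eigOne (Avf v f) → Module.finrank (ZMod 2) L = 2 →
        ∃! B, (B ∈ D ∧ B ≤ eigOne (Avf v f)) ∧ L ≤ B := by
  classical
  intro L hLF hL2
  obtain ⟨B, ⟨hBD, hLB⟩, huniq⟩ := hD.2 L hL2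
  set A := Avf v f with hA
  set a := A.vecMulLinear with ha
  set φ : (Fin v → ZMod 2) →ₗ[ZMod 2] (Fin v → ZMod 2) := A.vecMulLinear - LinearMap.id with hφ
  have hφapp : ∀ x, φ x = a x - x := fun x => rfl
  have hcube : ∀ x : Fin v → ZMod 2, a (a (a x)) = x := by
    intro x
    have h3 : A * (A * A) = 1 := avf_cube hvf
    simp only [ha, Matrix.vecMulLinear_apply, Matrix.vecMul_vecMul]
    rw [Matrix.mul_assoc, h3, Matrix.vecMul_one]
  have hself : ∀ u : Fin v → ZMod 2, u + u = 0 := fun u => funext fun i => zmod2_add_self (u i)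
  have hfix : ∀ x ∈ L, a x = x := by
    intro x hx
    have h := hLF hx
    simp only [eigOne, LinearMap.mem_ker, LinearMap.sub_apply, LinearMap.id_apply,
      sub_eq_zero] at h
    exact h
  have hBinv : mapMat A B = B := by
    have hmem : mapMat A B ∈ D := by rw [← hinv]; exact Set.mem_image_of_mem _ hBD
    refine huniq _ ⟨hmem, ?_⟩
    intro x hx
    exact ⟨x, hLB hx, hfix x hx⟩
  have haB : ∀ x ∈ B, a x ∈ B := by
    intro x hx
    have : a x ∈ mapMat A B := ⟨x, hx, rfl⟩
    rwa [hBinv] at this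
  have hφB : ∀ x ∈ B, φ x ∈ B := fun x hx => by rw [hφapp]; exact sub_mem (haB x hx) hx
  set M := B.map φ with hM
  have hMB : M ≤ B := by rintro w ⟨x, hx, rfl⟩; exact hφB x hx
  -- rank of M
  have hB3 : Module.finrank (ZMod 2) B = 3 := hD.1 B hBD
  set ψ := φ ∘ₗ B.subtype with hψ
  have hrange : LinearMap.range ψ = M := by
    rw [hψ, LinearMap.range_comp, Submodule.range_subtype]
  have hLker : L.comap B.subtype ≤ LinearMap.ker ψ := by
    intro x hx
    simp only [LinearMap.mem_ker, hψ, LinearMap.comp_apply, Submodule.subtype_apply]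
    have hxL : (x : Fin v → ZMod 2) ∈ L := hx
    rw [hφapp, hfix _ hxL, sub_self]
  have hL'2 : Module.finrank (ZMod 2) (L.comap B.subtype) = 2 := by
    exact (Submodule.comapSubtypeEquivOfLe hLB).finrank_eq.trans hL2
  have hker2 : 2 ≤ Module.finrank (ZMod 2) (LinearMap.ker ψ) := by
    exact le_trans (le_of_eq hL'2.symm) (Submodule.finrank_mono hLker)
  have hsum := LinearMap.finrank_range_add_finrank_ker ψ
  rw [hrange, hB3] at hsum
  have hrank : Module.finrank (ZMod 2) M ≤ 1 := by omega
  -- every element of M is fixed-ish: φ w = 0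
  have hkill : ∀ w ∈ M, φ w = 0 := by
    intro w hw
    by_contra hne
    have hw0 : w ≠ 0 := by rintro rfl; exact hne (map_zero φ)
    have hspan : Submodule.span (ZMod 2) {w} = M := by
      apply Submodule.eq_of_le_of_finrank_le (Submodule.span_le.mpr (by simpa using hw))
      rw [finrank_span_singleton hw0]; exact hrank
    have hφwM : φ w ∈ M := ⟨w, hMB hw, rfl⟩
    rw [← hspan, Submodule.mem_span_singleton] at hφwM
    obtain ⟨c, hc⟩ := hφwM
    rcases (by decide : ∀ c : ZMod 2, c = 0 ∨ c = 1) c with rfl | rfl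
    · rw [zero_smul] at hc; exact hne hc.symm
    · rw [one_smul] at hc
      -- hc : w = φ w, so a w = w + w = 0
      have haw : a w = 0 := by
        have h1 : a w - w = w := by rw [← hφapp, ← hc]
        have h2 : a w = w + w := eq_add_of_sub_eq h1
        rw [h2, hself w]
      have : w = 0 := by
        have := hcube w
        rw [haw, map_zero, map_zero] at this
        exact this.symm
      exact hw0 this
  have hBF : B ≤ eigOne A := by
    intro x hx
    have hwM : φ x ∈ M := ⟨x, hx, rfl⟩
    have hkw := hkill _ hwM
    have haw : a (φ x) = φ x := by
      have h1 : a (φ x) - φ x = 0 := by rw [← hφapp]; exact hkw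
      exact sub_eq_zero.mp h1
    have e2 : a (a x) = φ x + a x := by
      have h1 : a (a x) - a x = φ x := by
        rw [hφapp x] at haw
        rw [map_sub] at haw
        rw [hφapp x]
        exact haw
      exact eq_add_of_sub_eq h1
    have e3 : a (a (a x)) = φ x + (φ x + a x) := by
      rw [e2, map_add, haw, e2]
    have hfinal : a x = x := by
      have h4 : x = φ x + (φ x + a x) := (hcube x).symm.trans e3
      rw [← add_assoc, hself (φ x), zero_add] at h4
      exact h4.symm
    show x ∈ eigOne A
    simp only [eigOne, LinearMap.mem_ker, LinearMap.sub_apply, LinearMap.id_apply, sub_eq_zero]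
    exact hfinal
  exact ⟨B, ⟨⟨hBD, hBF⟩, hLB⟩, fun y hy => huniq y ⟨hy.1.1, hy.2⟩⟩
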